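/- arXiv:1309.5803 — 2 statements merged into one kernel-verified Lean document; each statement's English description precedes it below -/
import Mathlib

section
/- Take p = 2 and suppose the matrix M = Σ_{i=1}^N Φᵢᵀ Φᵢ is invertible. Let θ* = M⁻¹ Σ_{i=1}^N Φᵢᵀ Yᵢ be the pooled least-squares estimate and define λ_max = max_{1 ≤ i ≤ N} ‖2 Φᵢᵀ (Yᵢ − Φᵢ θ*)‖₂. Then for every λ ≥ λ_max, the point with θ̄ = θ* and θᵢ = θ* for all i = 1, …, N is a global minimizer of J; in particular, for λ ≥ λ_max the method picks out no abnormal systems. -/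
open scoped BigOperators
open Matrix

/-- Euclidean norm on `ℝ^n`. -/
noncomputable def eNorm2 {n : ℕ} (v : Fin n → ℝ) : ℝ := Real.sqrt (∑ i, v i ^ 2)

/-- The sum-of-norms regularized least-squares objective `J` with `p = 2`:
`J(θ̄, θ₁, …, θ_N) = Σᵢ ‖Yᵢ − Φᵢθᵢ‖₂² + λ Σᵢ ‖θ̄ − θᵢ‖₂`. -/
noncomputable def J {N Ω m : ℕ} (Y : Fin N → Fin Ω → ℝ)
    (Φ : Fin N → Matrix (Fin Ω) (Fin m) ℝ) (lam : ℝ)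
    (t : (Fin m → ℝ) × (Fin N → Fin m → ℝ)) : ℝ :=
  (∑ i, eNorm2 (Y i - (Φ i).mulVec (t.2 i)) ^ 2) + lam * ∑ i, eNorm2 (t.1 - t.2 i)

lemma eNorm2_zero {n : ℕ} : eNorm2 (0 : Fin n → ℝ) = 0 := by simp [eNorm2]

lemma eNorm2_nonneg {n : ℕ} (v : Fin n → ℝ) : 0 ≤ eNorm2 v := Real.sqrt_nonneg _

lemma eNorm2_sq {n : ℕ} (v : Fin n → ℝ) : eNorm2 v ^ 2 = v ⬝ᵥ v := by
  rw [eNorm2, Real.sq_sqrt (Finset.sum_nonneg fun i _ => sq_nonneg _)]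
  simp [dotProduct, sq]

lemma abs_dot_le {n : ℕ} (v w : Fin n → ℝ) : |v ⬝ᵥ w| ≤ eNorm2 v * eNorm2 w := by
  have h := abs_real_inner_le_norm ((WithLp.equiv 2 (Fin n → ℝ)).symm v)
      ((WithLp.equiv 2 (Fin n → ℝ)).symm w)
  simpa [eNorm2, EuclideanSpace.norm_eq, PiLp.inner_apply, dotProduct,
    RCLike.inner_apply, conj_trivial, sq_abs, mul_comm] using h

lemma sum_mulVec' {N n k : ℕ} (A : Fin N → Matrix (Fin n) (Fin k) ℝ) (v : Fin k → ℝ) :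
    (∑ i, A i).mulVec v = ∑ i, (A i).mulVec v := by
  ext j
  simp only [Matrix.mulVec, dotProduct, Finset.sum_apply, Matrix.sum_apply,
    Finset.sum_mul]
  rw [Finset.sum_comm]

lemma sum_dotProduct' {N k : ℕ} (a : Fin N → Fin k → ℝ) (u : Fin k → ℝ) :
    (∑ i, a i) ⬝ᵥ u = ∑ i, a i ⬝ᵥ u := by
  simp only [dotProduct, Finset.sum_apply, Finset.sum_mul]
  rw [Finset.sum_comm]

/-- Take `p = 2` and suppose `M = Σᵢ Φᵢᵀ Φᵢ` is invertible. Let `θ* = M⁻¹ Σᵢ Φᵢᵀ Yᵢ` be the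
pooled least-squares estimate and `λ_max = maxᵢ ‖2 Φᵢᵀ (Yᵢ − Φᵢ θ*)‖₂`. Then for every
`λ ≥ λ_max`, the point `θ̄ = θ₁ = ⋯ = θ_N = θ*` is a global minimizer of `J`: no abnormal
systems are picked out. -/
theorem lambda_ge_lambda_max_no_anomaly
    (N Ω m : ℕ) (hN : 0 < N)
    (Y : Fin N → Fin Ω → ℝ) (Φ : Fin N → Matrix (Fin Ω) (Fin m) ℝ)
    (M : Matrix (Fin m) (Fin m) ℝ) (hM : M = ∑ i, (Φ i)ᵀ * Φ i) (hMinv : IsUnit M)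
    (θstar : Fin m → ℝ) (hθstar : θstar = M⁻¹.mulVec (∑ i, (Φ i)ᵀ.mulVec (Y i)))
    (lamMax : ℝ)
    (hlamMax : lamMax =
      ⨆ i : Fin N, eNorm2 ((2 : ℝ) • (Φ i)ᵀ.mulVec (Y i - (Φ i).mulVec θstar)))
    (lam : ℝ) (hlam : lamMax ≤ lam) :
    ∀ t : (Fin m → ℝ) × (Fin N → Fin m → ℝ),
      J Y Φ lam (θstar, fun _ => θstar) ≤ J Y Φ lam t := by
  intro t
  obtain ⟨b, θ⟩ := t
  set r : Fin N → Fin Ω → ℝ := fun i => Y i - (Φ i).mulVec θstar with hr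
  set a : Fin N → Fin m → ℝ := fun i => (Φ i)ᵀ.mulVec (r i) with ha
  have hdet : IsUnit M.det := (Matrix.isUnit_iff_isUnit_det M).mp hMinv
  have hMθ : M.mulVec θstar = ∑ i, (Φ i)ᵀ.mulVec (Y i) := by
    rw [hθstar, Matrix.mulVec_mulVec, Matrix.mul_nonsing_inv M hdet, Matrix.one_mulVec]
  have hsa : ∑ i, a i = 0 := by
    have h1 : ∑ i, a i = (∑ i, (Φ i)ᵀ.mulVec (Y i)) - M.mulVec θstar := by
      rw [hM, sum_mulVec', ← Finset.sum_sub_distrib]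
      refine Finset.sum_congr rfl fun i _ => ?_
      simp [ha, hr, Matrix.mulVec_sub, Matrix.mulVec_mulVec]
    rw [h1, hMθ, sub_self]
  have hbdd : BddAbove (Set.range fun i : Fin N =>
      eNorm2 ((2 : ℝ) • (Φ i)ᵀ.mulVec (Y i - (Φ i).mulVec θstar))) :=
    Set.Finite.bddAbove (Set.finite_range _)
  have hle : ∀ i, eNorm2 ((2 : ℝ) • a i) ≤ lam := by
    intro i
    have := le_ciSup hbdd i
    rw [← hlamMax] at this
    exact le_trans this hlam
  have hlam0 : 0 ≤ lam := le_trans (eNorm2_nonneg _) (hle ⟨0, hN⟩)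
  -- per-term bound on the loss
  have key : ∀ i, r i ⬝ᵥ r i + 2 * (a i ⬝ᵥ (θstar - θ i))
      ≤ eNorm2 (Y i - (Φ i).mulVec (θ i)) ^ 2 := by
    intro i
    have hd : Y i - (Φ i).mulVec (θ i) = r i + (Φ i).mulVec (θstar - θ i) := by
      rw [hr, Matrix.mulVec_sub]
      funext j; simp only [Pi.add_apply, Pi.sub_apply]; ring
    rw [hd, eNorm2_sq]
    set w := (Φ i).mulVec (θstar - θ i) with hw'
    have expand : (r i + w) ⬝ᵥ (r i + w)
        = r i ⬝ᵥ r i + 2 * (r i ⬝ᵥ w) + w ⬝ᵥ w := by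
      rw [add_dotProduct, dotProduct_add, dotProduct_add,
        dotProduct_comm w (r i)]
      ring
    have hrw : r i ⬝ᵥ w = a i ⬝ᵥ (θstar - θ i) := by
      rw [hw', Matrix.dotProduct_mulVec]
      simp [ha, Matrix.mulVec_transpose]
    have hww : 0 ≤ w ⬝ᵥ w := by rw [← eNorm2_sq]; positivity
    rw [expand, hrw]
    linarith
  -- per-term bound on the cross term
  have cross : ∀ i, -(lam * eNorm2 (b - θ i)) ≤ 2 * (a i ⬝ᵥ (b - θ i)) := by
    intro i
    have h1 : |((2 : ℝ) • a i) ⬝ᵥ (b - θ i)| ≤ lam * eNorm2 (b - θ i) :=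
      le_trans (abs_dot_le _ _)
        (mul_le_mul_of_nonneg_right (hle i) (eNorm2_nonneg _))
    have h2 : ((2 : ℝ) • a i) ⬝ᵥ (b - θ i) = 2 * (a i ⬝ᵥ (b - θ i)) := by
      rw [smul_dotProduct]; simp
    rw [h2] at h1
    linarith [neg_abs_le (2 * (a i ⬝ᵥ (b - θ i))), h1]
  -- split the inner product
  have split : ∀ i, a i ⬝ᵥ (θstar - θ i) = a i ⬝ᵥ (θstar - b) + a i ⬝ᵥ (b - θ i) := by
    intro i
    rw [← dotProduct_add]
    congr 1
    abel
  have hzero : ∑ i, a i ⬝ᵥ (θstar - b) = 0 := by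
    rw [← sum_dotProduct', hsa, zero_dotProduct]
  -- assemble
  have LHS : J Y Φ lam (θstar, fun _ => θstar) = ∑ i, r i ⬝ᵥ r i := by
    simp only [_root_.J]
    have : ∀ i : Fin N, eNorm2 (θstar - θstar) = (0 : ℝ) := by
      intro i; simp [eNorm2, sub_self]
    simp [this, eNorm2_sq, hr, eNorm2_zero]
  rw [LHS]
  show _ ≤ (∑ i, eNorm2 (Y i - (Φ i).mulVec (θ i)) ^ 2) + lam * ∑ i, eNorm2 (b - θ i)
  have step1 : ∑ i, (r i ⬝ᵥ r i + 2 * (a i ⬝ᵥ (θstar - θ i)))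
      ≤ ∑ i, eNorm2 (Y i - (Φ i).mulVec (θ i)) ^ 2 :=
    Finset.sum_le_sum fun i _ => key i
  have step2 : ∑ i, (r i ⬝ᵥ r i + 2 * (a i ⬝ᵥ (θstar - θ i)))
      = ∑ i, r i ⬝ᵥ r i + 2 * (∑ i, a i ⬝ᵥ (b - θ i)) := by
    rw [Finset.sum_add_distrib]
    congr 1
    rw [← Finset.mul_sum]
    congr 1
    calc ∑ i, a i ⬝ᵥ (θstar - θ i)
        = ∑ i, (a i ⬝ᵥ (θstar - b) + a i ⬝ᵥ (b - θ i)) :=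
          Finset.sum_congr rfl fun i _ => split i
      _ = (∑ i, a i ⬝ᵥ (θstar - b)) + ∑ i, a i ⬝ᵥ (b - θ i) := Finset.sum_add_distrib
      _ = ∑ i, a i ⬝ᵥ (b - θ i) := by rw [hzero, zero_add]
  have step3 : -(lam * ∑ i, eNorm2 (b - θ i)) ≤ 2 * ∑ i, a i ⬝ᵥ (b - θ i) := by
    rw [Finset.mul_sum, ← Finset.sum_neg_distrib, Finset.mul_sum]
    refine Finset.sum_le_sum fun i _ => ?_
    exact cross i
  rw [step2] at step1
  linarith
end

section
/- Take p = 2 and suppose the matrix M = Σ_{i=1}^N Φᵢᵀ Φᵢ is invertible. Let θ* = M⁻¹ Σ_{i=1}^N Φᵢᵀ Yᵢ and λ_max = max_{1 ≤ i ≤ N} ‖2 Φᵢᵀ (Yᵢ − Φᵢ θ*)‖₂. If 0 ≤ λ < λ_max, then no point of the form θ̄ = θ₁ = ⋯ = θ_N (all parameters equal) is a global minimizer of J; in particular, for λ < λ_max the method always picks out at least one abnormal system. -/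
open scoped BigOperators
open Matrix

lemma sq_eNorm2 {n : ℕ} (v : Fin n → ℝ) : eNorm2 v ^ 2 = ∑ i, v i ^ 2 :=
  Real.sq_sqrt (Finset.sum_nonneg fun _ _ => sq_nonneg _)

lemma eNorm2_smul {n : ℕ} (a : ℝ) (v : Fin n → ℝ) : eNorm2 (a • v) = |a| * eNorm2 v := by
  simp only [eNorm2, Pi.smul_apply, smul_eq_mul, mul_pow, ← Finset.mul_sum]
  rw [Real.sqrt_mul (sq_nonneg a), Real.sqrt_sq_eq_abs]

lemma dot_mulVec_eq {Ω m : ℕ} (u : Fin Ω → ℝ) (A : Matrix (Fin Ω) (Fin m) ℝ) (d : Fin m → ℝ) :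
    u ⬝ᵥ A.mulVec d = Aᵀ.mulVec u ⬝ᵥ d := by
  rw [Matrix.dotProduct_mulVec, Matrix.mulVec_transpose]

lemma sum_mulVec'_s5 {ι : Type*} (s : Finset ι) {Ω m : ℕ} (A : ι → Matrix (Fin Ω) (Fin m) ℝ)
    (v : Fin m → ℝ) : (∑ i ∈ s, A i).mulVec v = ∑ i ∈ s, (A i).mulVec v := by
  induction s using Finset.cons_induction with
  | empty => simp [Matrix.mulVec]
  | cons a s ha ih => simp [Finset.sum_cons, Matrix.add_mulVec, ih]

lemma sum_dot' {ι : Type*} (s : Finset ι) {m : ℕ} (u : ι → Fin m → ℝ) (d : Fin m → ℝ) :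
    (∑ i ∈ s, u i) ⬝ᵥ d = ∑ i ∈ s, u i ⬝ᵥ d := by
  induction s using Finset.cons_induction with
  | empty => simp
  | cons a s ha ih => simp [Finset.sum_cons, add_dotProduct, ih]

lemma expand_sq {Ω m : ℕ} (Y : Fin Ω → ℝ) (A : Matrix (Fin Ω) (Fin m) ℝ) (θ d : Fin m → ℝ) :
    eNorm2 (Y - A.mulVec (θ + d)) ^ 2
      = eNorm2 (Y - A.mulVec θ) ^ 2 - 2 * (Aᵀ.mulVec (Y - A.mulVec θ) ⬝ᵥ d)
        + ∑ ω, (A.mulVec d ω) ^ 2 := by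
  rw [← dot_mulVec_eq, sq_eNorm2, sq_eNorm2]
  simp only [Matrix.mulVec_add, dotProduct, Pi.sub_apply, Pi.add_apply]
  rw [Finset.mul_sum, ← Finset.sum_sub_distrib, ← Finset.sum_add_distrib]
  exact Finset.sum_congr rfl fun ω _ => by ring

/-- Take `p = 2` and suppose `M = Σᵢ Φᵢᵀ Φᵢ` is invertible. Let `θ* = M⁻¹ Σᵢ Φᵢᵀ Yᵢ` and
`λ_max = maxᵢ ‖2 Φᵢᵀ (Yᵢ − Φᵢ θ*)‖₂`. If `0 ≤ λ < λ_max`, then no point with all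
parameters equal (`θ̄ = θ₁ = ⋯ = θ_N = c`) is a global minimizer of `J`: at least one
abnormal system is always picked out. -/
theorem lambda_lt_lambda_max_picks_anomaly
    (N Ω m : ℕ) (hN : 0 < N)
    (Y : Fin N → Fin Ω → ℝ) (Φ : Fin N → Matrix (Fin Ω) (Fin m) ℝ)
    (M : Matrix (Fin m) (Fin m) ℝ) (hM : M = ∑ i, (Φ i)ᵀ * Φ i) (hMinv : IsUnit M)
    (θstar : Fin m → ℝ) (hθstar : θstar = M⁻¹.mulVec (∑ i, (Φ i)ᵀ.mulVec (Y i)))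
    (lamMax : ℝ)
    (hlamMax : lamMax =
      ⨆ i : Fin N, eNorm2 ((2 : ℝ) • (Φ i)ᵀ.mulVec (Y i - (Φ i).mulVec θstar)))
    (lam : ℝ) (hlam0 : 0 ≤ lam) (hlam : lam < lamMax) :
    ∀ c : Fin m → ℝ, ∃ t : (Fin m → ℝ) × (Fin N → Fin m → ℝ),
      J Y Φ lam t < J Y Φ lam (c, fun _ => c) := by
  intro c
  haveI hNe : Nonempty (Fin N) := ⟨⟨0, hN⟩⟩
  have hdet : IsUnit M.det := (Matrix.isUnit_iff_isUnit_det M).mp hMinv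
  have hMθ : M.mulVec θstar = ∑ i, (Φ i)ᵀ.mulVec (Y i) := by
    rw [hθstar, Matrix.mulVec_mulVec, Matrix.mul_nonsing_inv M hdet, Matrix.one_mulVec]
  have hgrad : ∑ i, (Φ i)ᵀ.mulVec (Y i - (Φ i).mulVec θstar) = 0 := by
    have h1 : ∀ i : Fin N, (Φ i)ᵀ.mulVec (Y i - (Φ i).mulVec θstar)
        = (Φ i)ᵀ.mulVec (Y i) - ((Φ i)ᵀ * (Φ i)).mulVec θstar := by
      intro i; rw [Matrix.mulVec_sub, Matrix.mulVec_mulVec]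
    rw [Finset.sum_congr rfl (fun i _ => h1 i), Finset.sum_sub_distrib,
      ← sum_mulVec'_s5, ← hM, hMθ, sub_self]
  by_cases hc : c = θstar
  · -- all-equal point is exactly the least-squares optimum: perturb the worst system
    subst hc
    obtain ⟨i, hi⟩ : ∃ i, lam < eNorm2 ((2 : ℝ) • (Φ i)ᵀ.mulVec (Y i - (Φ i).mulVec c)) := by
      rw [hlamMax] at hlam; exact exists_lt_of_lt_ciSup hlam
    set g : Fin m → ℝ := (2 : ℝ) • (Φ i)ᵀ.mulVec (Y i - (Φ i).mulVec c) with hg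
    set s : ℝ := eNorm2 g with hs
    have hs0 : 0 < s := lt_of_le_of_lt hlam0 hi
    set A : ℝ := ∑ ω, ((Φ i).mulVec g ω) ^ 2 with hA
    have hA0 : 0 ≤ A := Finset.sum_nonneg fun _ _ => sq_nonneg _
    set B : ℝ := s * (s - lam) with hB
    have hB0 : 0 < B := mul_pos hs0 (by linarith)
    set ε : ℝ := B / (A + B) with hε
    have hAB : 0 < A + B := by linarith
    have hε0 : 0 < ε := div_pos hB0 hAB
    have hεAB : ε * (A + B) = B := div_mul_cancel₀ _ (ne_of_gt hAB)
    have hεA : ε * A < B := by nlinarith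
    refine ⟨(c, Function.update (fun _ => c) i (c + ε • g)), ?_⟩
    simp only [_root_.J]
    have key1 : ∀ j : Fin N, j ≠ i →
        Function.update (fun _ => c) i (c + ε • g) j = c := fun j hj =>
      Function.update_of_ne hj _ _
    have key2 : Function.update (fun _ => c) i (c + ε • g) i = c + ε • g :=
      Function.update_self _ _ _
    have hsplitL : ∑ j, eNorm2 (Y j - (Φ j).mulVec
          (Function.update (fun _ => c) i (c + ε • g) j)) ^ 2
        = (∑ j ∈ Finset.univ.erase i, eNorm2 (Y j - (Φ j).mulVec c) ^ 2)
          + eNorm2 (Y i - (Φ i).mulVec (c + ε • g)) ^ 2 := by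
      rw [← Finset.sum_erase_add Finset.univ _ (Finset.mem_univ i), key2]
      congr 1
      exact Finset.sum_congr rfl fun j hj => by rw [key1 j (Finset.ne_of_mem_erase hj)]
    have hsplitR : ∑ j, eNorm2 (Y j - (Φ j).mulVec c) ^ 2
        = (∑ j ∈ Finset.univ.erase i, eNorm2 (Y j - (Φ j).mulVec c) ^ 2)
          + eNorm2 (Y i - (Φ i).mulVec c) ^ 2 :=
      (Finset.sum_erase_add Finset.univ _ (Finset.mem_univ i)).symm
    have hdot : (Φ i)ᵀ.mulVec (Y i - (Φ i).mulVec c) ⬝ᵥ (ε • g) = ε * s ^ 2 / 2 := by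
      have hhalf : (Φ i)ᵀ.mulVec (Y i - (Φ i).mulVec c) = (1 / 2 : ℝ) • g := by
        rw [hg, smul_smul]; norm_num
      rw [hhalf, smul_dotProduct, dotProduct_smul, sq_eNorm2]
      simp only [dotProduct, smul_eq_mul, ← sq]
      ring
    have hquad : ∑ ω, ((Φ i).mulVec (ε • g) ω) ^ 2 = ε ^ 2 * A := by
      rw [hA, Finset.mul_sum]
      refine Finset.sum_congr rfl fun ω _ => ?_
      rw [Matrix.mulVec_smul]
      simp [smul_eq_mul, mul_pow]
    have hterm : eNorm2 (Y i - (Φ i).mulVec (c + ε • g)) ^ 2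
        = eNorm2 (Y i - (Φ i).mulVec c) ^ 2 - ε * s ^ 2 + ε ^ 2 * A := by
      rw [expand_sq, hdot, hquad]; ring
    have hpenL : ∑ j, eNorm2 (c - Function.update (fun _ => c) i (c + ε • g) j) = ε * s := by
      rw [← Finset.sum_erase_add Finset.univ _ (Finset.mem_univ i), key2]
      have h0 : ∑ j ∈ Finset.univ.erase i,
          eNorm2 (c - Function.update (fun _ => c) i (c + ε • g) j) = 0 := by
        refine Finset.sum_eq_zero fun j hj => ?_
        rw [key1 j (Finset.ne_of_mem_erase hj), sub_self, eNorm2_zero]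
      rw [h0, zero_add]
      have : c - (c + ε • g) = (-ε) • g := by
        funext k; simp [Pi.smul_apply, smul_eq_mul]
      rw [this, eNorm2_smul, abs_neg, abs_of_pos hε0, ← hs]
    have hpenR : ∑ j : Fin N, eNorm2 (c - c) = 0 := by
      simp [sub_self, eNorm2_zero]
    rw [hsplitL, hterm, hpenL, hsplitR, hpenR]
    have hkey : ε * (ε * A) < ε * B := mul_lt_mul_of_pos_left hεA hε0
    have hsB : s ^ 2 = s * s := sq s
    nlinarith [hkey, hB0, hε0, mul_pos hε0 hB0]
  · -- move everything to the strict optimum θ*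
    refine ⟨(θstar, fun _ => θstar), ?_⟩
    simp only [_root_.J]
    set d : Fin m → ℝ := c - θstar with hd
    have hd0 : d ≠ 0 := sub_ne_zero.mpr hc
    have hcd : c = θstar + d := by rw [hd]; ring
    set Q : ℝ := ∑ j, ∑ ω, ((Φ j).mulVec d ω) ^ 2 with hQ
    have hQnn : 0 ≤ Q := Finset.sum_nonneg fun _ _ => Finset.sum_nonneg fun _ _ => sq_nonneg _
    have hQne : Q ≠ 0 := by
      intro h0
      have hz : ∀ j : Fin N, (Φ j).mulVec d = 0 := by
        intro j
        have hj : ∑ ω, ((Φ j).mulVec d ω) ^ 2 = 0 :=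
          (Finset.sum_eq_zero_iff_of_nonneg fun _ _ =>
            Finset.sum_nonneg fun _ _ => sq_nonneg _).mp h0 j (Finset.mem_univ j)
        funext ω
        have := (Finset.sum_eq_zero_iff_of_nonneg fun _ _ => sq_nonneg _).mp hj ω
          (Finset.mem_univ ω)
        exact pow_eq_zero_iff (two_ne_zero) |>.mp this
      have hMd : M.mulVec d = 0 := by
        rw [hM, sum_mulVec'_s5]
        refine Finset.sum_eq_zero fun j _ => ?_
        rw [← Matrix.mulVec_mulVec, hz j, Matrix.mulVec_zero]
      have : d = 0 := by
        have h2 : (M⁻¹ * M).mulVec d = M⁻¹.mulVec (M.mulVec d) :=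
          (Matrix.mulVec_mulVec _ _ _).symm
        rw [Matrix.nonsing_inv_mul M hdet, Matrix.one_mulVec, hMd,
          Matrix.mulVec_zero] at h2
        exact h2
      exact hd0 this
    have hQpos : 0 < Q := lt_of_le_of_ne hQnn (Ne.symm hQne)
    have hsum : ∑ j, eNorm2 (Y j - (Φ j).mulVec c) ^ 2
        = ∑ j, eNorm2 (Y j - (Φ j).mulVec θstar) ^ 2 + Q := by
      have hc' : ∀ j : Fin N, eNorm2 (Y j - (Φ j).mulVec c) ^ 2
          = eNorm2 (Y j - (Φ j).mulVec θstar) ^ 2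
            - 2 * ((Φ j)ᵀ.mulVec (Y j - (Φ j).mulVec θstar) ⬝ᵥ d)
            + ∑ ω, ((Φ j).mulVec d ω) ^ 2 := by
        intro j; rw [hcd]; exact expand_sq _ _ _ _
      rw [Finset.sum_congr rfl fun j _ => hc' j, Finset.sum_add_distrib,
        Finset.sum_sub_distrib]
      have hcross : ∑ j, 2 * ((Φ j)ᵀ.mulVec (Y j - (Φ j).mulVec θstar) ⬝ᵥ d) = 0 := by
        rw [← Finset.mul_sum, ← sum_dot', hgrad, zero_dotProduct, mul_zero]
      rw [hcross, hQ]; ring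
    have hpen1 : ∑ j : Fin N, eNorm2 (θstar - θstar) = 0 := by simp [sub_self, eNorm2_zero]
    have hpen2 : ∑ j : Fin N, eNorm2 (c - c) = 0 := by simp [sub_self, eNorm2_zero]
    rw [hpen1, hpen2, hsum]
    linarith
end
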